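/- Let G = (V, E) be a connected proper interval graph with proper interval representation and edge interval ordering σ_E = (e_1, …, e_m), and let 1 ≤ i ≤ m. Let S ⊆ V satisfy: |N_G[e_a] ∩ S| ≥ 2 for every index a < i, and |(N_G[e_a] ∪ N_G[e_b]) ∩ S| ≥ 3 for every index a < i and every edge e_b ≠ e_a with N_G[e_a] ∩ N_G[e_b] ≠ ∅. Suppose |N_G[e_i] ∩ S| ≤ 2 and set q = 2 − |N_G[e_i] ∩ S|. If S is contained in some minimum liar's vertex-edge dominating set of G, then there exists a minimum liar's vertex-edge dominating set of G containing S ∪ T^q[N_G[e_i] \ S]. -/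

import Mathlib

open SimpleGraph

variable {V : Type*}

/-- closed neighbourhood `N_G[v]` -/
def cN (G : SimpleGraph V) (v : V) : Set V := insert v {u | G.Adj v u}

/-- closed neighbourhood `N_G[e]` of an edge given as a `Sym2`. -/
def eN (G : SimpleGraph V) (e : Sym2 V) : Set V := {w | ∃ x ∈ e, w ∈ cN G x}

/-- closed neighbourhood `N_G[e]` of an edge given as an ordered pair `e = uv`. -/
def eNp (G : SimpleGraph V) (e : V × V) : Set V := cN G e.1 ∪ cN G e.2

/-- A liar's vertex-edge dominating set. -/
def IsLiarVE (G : SimpleGraph V) (L : Set V) : Prop :=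
  (∀ e ∈ G.edgeSet, 2 ≤ (eN G e ∩ L).ncard) ∧
  (∀ e ∈ G.edgeSet, ∀ f ∈ G.edgeSet, e ≠ f → 3 ≤ ((eN G e ∪ eN G f) ∩ L).ncard)

/-- A minimum liar's vertex-edge dominating set. -/
def IsMinLiar (G : SimpleGraph V) (L : Set V) : Prop :=
  IsLiarVE G L ∧ ∀ L' : Set V, IsLiarVE G L' → L.ncard ≤ L'.ncard

/-- A proper interval representation of a graph `G`: closed intervals `[l v, r v]`,
with all `2|V|` endpoints pairwise distinct, such that two distinct vertices are
adjacent iff their intervals intersect, and no interval contains another. -/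
structure PIRep {V : Type*} (G : SimpleGraph V) where
  l : V → ℝ
  r : V → ℝ
  lr : ∀ v, l v < r v
  distinct : Function.Injective (Sum.elim l r : V ⊕ V → ℝ)
  adj_iff : ∀ u v : V, u ≠ v → (G.Adj u v ↔ (l u ≤ r v ∧ l v ≤ r u))
  proper : ∀ u v : V, u ≠ v → ¬ (l u ≤ l v ∧ r v ≤ r u)

/-- The order `<_E` on edges, written as ordered pairs `e = uv` with `r u < r v`. -/
def ltE {G : SimpleGraph V} (ρ : PIRep G) (e f : V × V) : Prop :=
  ρ.r e.2 < ρ.r f.2 ∨ (e.2 = f.2 ∧ ρ.r e.1 < ρ.r f.1)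

/-- An edge interval ordering `σ_E = (e_1, …, e_m)` of all edges of `G`,
increasing with respect to `<_E`; each edge `e_i = (u_i, v_i)` with `r u_i < r v_i`. -/
structure EdgeOrder {V : Type*} {G : SimpleGraph V} (ρ : PIRep G) where
  m : ℕ
  seq : Fin m → V × V
  adj : ∀ i, G.Adj (seq i).1 (seq i).2
  ord : ∀ i, ρ.r (seq i).1 < ρ.r (seq i).2
  surj : ∀ u v : V, G.Adj u v → ρ.r u < ρ.r v → ∃ i, seq i = (u, v)
  mono : ∀ i j, i < j → ltE ρ (seq i) (seq j)

/-- `T^q[S]`: the `q` vertices of `S` whose intervals have the largest right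
endpoints (all of `S` if `|S| ≤ q`). -/
def Tq {G : SimpleGraph V} (ρ : PIRep G) (q : ℕ) (S : Set V) : Set V :=
  {v | v ∈ S ∧ ({u | u ∈ S ∧ ρ.r v < ρ.r u}).ncard < q}

/-!
If a minimum liar's set `L ⊇ S` misses the vertices `K` of `T = T^q[N[e_i] \ S]`, then, as
`|N[e_i] ∩ L| ≥ 2`, it has `|K|` vertices `X` in `N[e_i] \ (S ∪ T)`, and `L' = (L \ X) ∪ K` is
no larger. Each interval of `X` ends before every interval of `K`. A neighbourhood (of an edge or of
two edges) meeting `X` but missing some `t ∈ K` comes from an edge `e_a` that ends before `t`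
begins, so `a < i` and `S ⊆ L'` already satisfies the conditions there; any other neighbourhood
gains from `K` at least as many vertices as it loses from `X`.
-/

lemma eN_mk (G : SimpleGraph V) (p : V × V) : eN G s(p.1, p.2) = eNp G p := by
  ext w
  simp [eN, eNp]

section Counting

variable [Finite V] {A B L N S T X K W : Set V}

lemma ncard_inter_le_ncard_inter_sdiff_union (hXK : X.ncard ≤ K.ncard) (hKL : Disjoint K L)
    (hW : K ⊆ W ∨ Disjoint W X) : (W ∩ L).ncard ≤ (W ∩ (L \ X ∪ K)).ncard := by
  rcases hW with hKW | hWX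
  · have hdisj : Disjoint ((W ∩ L) \ X) K :=
      (hKL.symm.mono_left (Set.inter_subset_right.trans' Set.sdiff_subset))
    calc (W ∩ L).ncard ≤ ((W ∩ L) \ X).ncard + X.ncard := Set.ncard_le_ncard_sdiff_add_ncard _ _
      _ ≤ ((W ∩ L) \ X).ncard + K.ncard := by omega
      _ = ((W ∩ L) \ X ∪ K).ncard := (Set.ncard_union_eq hdisj).symm
      _ ≤ (W ∩ (L \ X ∪ K)).ncard := Set.ncard_le_ncard fun w hw => by
        rcases hw with ⟨⟨hwW, hwL⟩, hwX⟩ | hwK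
        exacts [⟨hwW, .inl ⟨hwL, hwX⟩⟩, ⟨hKW hwK, .inr hwK⟩]
  · exact Set.ncard_le_ncard fun w ⟨hwW, hwL⟩ =>
      ⟨hwW, .inl ⟨hwL, Set.disjoint_left.1 hWX hwW⟩⟩

lemma ncard_sdiff_union_eq (hXL : X ⊆ L) (hKL : Disjoint K L) (hXK : X.ncard = K.ncard) :
    (L \ X ∪ K).ncard = L.ncard := by
  have hX : X.ncard ≤ L.ncard := Set.ncard_le_ncard hXL
  rw [Set.ncard_union_eq (hKL.symm.mono_left Set.sdiff_subset), Set.ncard_sdiff hXL]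
  omega

lemma three_le_ncard_union_inter (hAB : Disjoint A B)
    (hA : 2 ≤ (A ∩ L).ncard) (hB : 2 ≤ (B ∩ L).ncard) : 3 ≤ ((A ∪ B) ∩ L).ncard := by
  rw [Set.union_inter_distrib_right,
    Set.ncard_union_eq (hAB.mono Set.inter_subset_left Set.inter_subset_left)]
  omega

lemma ncard_sdiff_le_ncard_sdiff_sdiff (hSL : S ⊆ L)
    (hN : 2 ≤ (N ∩ L).ncard) (hT : T.ncard ≤ 2 - (N ∩ S).ncard) :
    (T \ L).ncard ≤ (((N ∩ L) \ S) \ T).ncard := by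
  have hA := Set.ncard_inter_add_ncard_sdiff_eq_ncard (N ∩ L) S
  rw [Set.inter_assoc, Set.inter_eq_right.2 hSL] at hA
  have hAT := Set.ncard_inter_add_ncard_sdiff_eq_ncard ((N ∩ L) \ S) T
  have hTL := Set.ncard_inter_add_ncard_sdiff_eq_ncard T L
  have : ((N ∩ L) \ S ∩ T).ncard ≤ (T ∩ L).ncard :=
    Set.ncard_le_ncard fun w hw => ⟨hw.2, hw.1.1.2⟩
  omega

end Counting

namespace PIRep

variable {G : SimpleGraph V} (ρ : PIRep G)

lemma r_injective : Function.Injective ρ.r := fun x y h => by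
  simpa using @ρ.distinct (.inr x) (.inr y) (by simpa using h)

lemma l_lt_l_of_r_lt_r {x y : V} (h : ρ.r x < ρ.r y) : ρ.l x < ρ.l y := by
  by_contra! hle
  exact ρ.proper y x (fun e => (e ▸ h).false) ⟨hle, h.le⟩

lemma mem_cN_iff (x w : V) : w ∈ cN G x ↔ ρ.l w ≤ ρ.r x ∧ ρ.l x ≤ ρ.r w := by
  by_cases hxw : w = x
  · subst hxw
    simp [cN, (ρ.lr w).le]
  · simp [cN, hxw, ρ.adj_iff x w (Ne.symm hxw), and_comm]

lemma mem_eNp_iff {a b : V} (hab : G.Adj a b) (hr : ρ.r a < ρ.r b) (w : V) :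
    w ∈ eNp G (a, b) ↔ ρ.l a ≤ ρ.r w ∧ ρ.l w ≤ ρ.r b := by
  have hba : ρ.l b ≤ ρ.r a := ((ρ.adj_iff a b hab.ne).1 hab).2
  have hlab : ρ.l a < ρ.l b := ρ.l_lt_l_of_r_lt_r hr
  have hw := ρ.lr w
  simp only [eNp, Set.mem_union, ρ.mem_cN_iff]
  constructor
  · rintro (⟨h1, h2⟩ | ⟨h1, h2⟩)
    · exact ⟨h2, h1.trans hr.le⟩
    · exact ⟨hlab.le.trans h2, h1⟩
  · rintro ⟨h1, h2⟩
    by_cases hbw : ρ.l b ≤ ρ.r w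
    · exact .inr ⟨h2, hbw⟩
    · exact .inl ⟨by linarith, h1⟩

lemma Tq_subset (q : ℕ) (M : Set V) : Tq ρ q M ⊆ M := fun _ hv => hv.1

lemma r_lt_r_of_notMem_Tq [Finite V] {q : ℕ} {M : Set V} {x t : V}
    (hx : x ∈ M) (hxT : x ∉ Tq ρ q M) (ht : t ∈ Tq ρ q M) : ρ.r x < ρ.r t := by
  by_contra! hle
  have hsub : {u | u ∈ M ∧ ρ.r x < ρ.r u} ⊆ {u | u ∈ M ∧ ρ.r t < ρ.r u} :=
    fun u ⟨hu, hru⟩ => ⟨hu, hle.trans_lt hru⟩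
  exact hxT ⟨hx, (Set.ncard_le_ncard hsub).trans_lt ht.2⟩

lemma ncard_Tq_le [Finite V] (q : ℕ) (M : Set V) : (Tq ρ q M).ncard ≤ q := by
  obtain hT | hT := (Tq ρ q M).eq_empty_or_nonempty
  · simp [hT]
  -- all of `Tq` except its leftmost vertex `t₀` lies to the right of `t₀`
  obtain ⟨t₀, ht₀, hmin⟩ := Set.exists_min_image _ ρ.r (Set.toFinite _) hT
  have hsub : Tq ρ q M \ {t₀} ⊆ {u | u ∈ M ∧ ρ.r t₀ < ρ.r u} := fun t ⟨ht, ht₀'⟩ =>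
    ⟨ht.1, (hmin t ht).lt_of_ne fun h => ht₀' (ρ.r_injective h).symm⟩
  have := Set.ncard_le_ncard hsub
  rw [Set.ncard_sdiff_singleton_of_mem ht₀] at this
  have := ht₀.2
  omega

end PIRep

namespace EdgeOrder

variable {G : SimpleGraph V} {ρ : PIRep G} (σ : EdgeOrder ρ)

lemma lt_of_r_snd_lt_r_snd {a i : Fin σ.m} (h : ρ.r (σ.seq a).2 < ρ.r (σ.seq i).2) : a < i := by
  by_contra! hia
  rcases hia.lt_or_eq with hlt | rfl
  · rcases σ.mono i a hlt with h' | ⟨h', _⟩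
    · exact (h.trans h').false
    · exact (h' ▸ h).false
  · exact h.false

lemma exists_seq_eq_of_mem_edgeSet {e : Sym2 V} (he : e ∈ G.edgeSet) :
    ∃ a, e = s((σ.seq a).1, (σ.seq a).2) := by
  induction e using Sym2.ind with
  | _ x y =>
    have hxy : G.Adj x y := he
    rcases lt_trichotomy (ρ.r x) (ρ.r y) with h | h | h
    · obtain ⟨a, ha⟩ := σ.surj x y hxy h
      exact ⟨a, by rw [ha]⟩
    · exact absurd (ρ.r_injective h) hxy.ne
    · obtain ⟨a, ha⟩ := σ.surj y x hxy.symm h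
      exact ⟨a, by rw [ha, Sym2.eq_swap]⟩

lemma mk_seq_eq_mk_seq_iff {a b : Fin σ.m} :
    s((σ.seq a).1, (σ.seq a).2) = s((σ.seq b).1, (σ.seq b).2) ↔ σ.seq a = σ.seq b := by
  refine ⟨fun h => (Sym2.mk_eq_mk_iff.1 h).resolve_right fun hswap => ?_, fun h => by rw [h]⟩
  have ha := σ.ord a
  have hb := σ.ord b
  rw [hswap] at ha
  exact (ha.trans hb).false

lemma isLiarVE_iff {L : Set V} :
    IsLiarVE G L ↔ (∀ a, 2 ≤ (eNp G (σ.seq a) ∩ L).ncard) ∧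
      ∀ a b, σ.seq a ≠ σ.seq b → 3 ≤ ((eNp G (σ.seq a) ∪ eNp G (σ.seq b)) ∩ L).ncard := by
  constructor
  · rintro ⟨h2, h3⟩
    refine ⟨fun a => ?_, fun a b hab => ?_⟩
    · simpa only [eN_mk] using h2 _ (G.mem_edgeSet.2 (σ.adj a))
    · simpa only [eN_mk] using
        h3 _ (G.mem_edgeSet.2 (σ.adj a)) _ (G.mem_edgeSet.2 (σ.adj b))
          (mt σ.mk_seq_eq_mk_seq_iff.1 hab)
  · rintro ⟨h2, h3⟩
    refine ⟨fun e he => ?_, fun e he f hf hef => ?_⟩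
    · obtain ⟨a, rfl⟩ := σ.exists_seq_eq_of_mem_edgeSet he
      simpa only [eN_mk] using h2 a
    · obtain ⟨a, rfl⟩ := σ.exists_seq_eq_of_mem_edgeSet he
      obtain ⟨b, rfl⟩ := σ.exists_seq_eq_of_mem_edgeSet hf
      simpa only [eN_mk] using h3 a b (mt σ.mk_seq_eq_mk_seq_iff.2 hef)

lemma lt_of_mem_eNp_of_notMem_eNp {a i : Fin σ.m} {x t : V} (hx : x ∈ eNp G (σ.seq a))
    (hta : t ∉ eNp G (σ.seq a)) (hti : t ∈ eNp G (σ.seq i)) (hxt : ρ.r x < ρ.r t) : a < i := by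
  rw [ρ.mem_eNp_iff (σ.adj a) (σ.ord a)] at hx hta
  rw [ρ.mem_eNp_iff (σ.adj i) (σ.ord i)] at hti
  push Not at hta
  -- `e_a` ends before `t` begins, `e_i` ends after it
  exact σ.lt_of_r_snd_lt_r_snd ((hta (hx.1.trans hxt.le)).trans_le hti.2)

end EdgeOrder

section Exchange

variable [Finite V] {G : SimpleGraph V} {ρ : PIRep G} {σ : EdgeOrder ρ} {i : Fin σ.m}
  {S L X K : Set V}

lemma IsLiarVE.sdiff_union (hL : IsLiarVE G L) (hS : S ⊆ L \ X ∪ K)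
    (hprev2 : ∀ a : Fin σ.m, a < i → 2 ≤ (eNp G (σ.seq a) ∩ S).ncard)
    (hprev3 : ∀ a : Fin σ.m, a < i → ∀ b : Fin σ.m, σ.seq b ≠ σ.seq a →
      (eNp G (σ.seq a) ∩ eNp G (σ.seq b)).Nonempty →
      3 ≤ ((eNp G (σ.seq a) ∪ eNp G (σ.seq b)) ∩ S).ncard)
    (hXK : X.ncard ≤ K.ncard) (hKL : Disjoint K L) (hK : K ⊆ eNp G (σ.seq i))
    (hr : ∀ x ∈ X, ∀ t ∈ K, ρ.r x < ρ.r t) : IsLiarVE G (L \ X ∪ K) := by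
  rw [σ.isLiarVE_iff] at hL ⊢
  have hmono W (hW : K ⊆ W ∨ Disjoint W X) := ncard_inter_le_ncard_inter_sdiff_union hXK hKL hW
  have hS' (W : Set V) : (W ∩ S).ncard ≤ (W ∩ (L \ X ∪ K)).ncard :=
    Set.ncard_le_ncard (Set.inter_subset_inter_right W hS)
  have early {W : Set V} (hW : ¬ (K ⊆ W ∨ Disjoint W X)) :
      ∃ x ∈ W, ∃ t ∈ K, t ∉ W ∧ x ∈ X ∧ t ∈ eNp G (σ.seq i) ∧ ρ.r x < ρ.r t := by
    obtain ⟨t, htK, htW⟩ := Set.not_subset.1 (not_or.1 hW).1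
    obtain ⟨x, hxW, hxX⟩ := Set.not_disjoint_iff.1 (not_or.1 hW).2
    exact ⟨x, hxW, t, htK, htW, hxX, hK htK, hr x hxX t htK⟩
  have cond1 a : 2 ≤ (eNp G (σ.seq a) ∩ (L \ X ∪ K)).ncard := by
    by_cases hW : K ⊆ eNp G (σ.seq a) ∨ Disjoint (eNp G (σ.seq a)) X
    · exact (hL.1 a).trans (hmono _ hW)
    · obtain ⟨x, hxa, t, -, hta, -, hti, hxt⟩ := early hW
      exact (hprev2 a (σ.lt_of_mem_eNp_of_notMem_eNp hxa hta hti hxt)).trans (hS' _)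
  have cond2_of_lt a (ha : a < i) b (hab : σ.seq a ≠ σ.seq b) :
      3 ≤ ((eNp G (σ.seq a) ∪ eNp G (σ.seq b)) ∩ (L \ X ∪ K)).ncard := by
    by_cases hdisj : Disjoint (eNp G (σ.seq a)) (eNp G (σ.seq b))
    · exact three_le_ncard_union_inter hdisj (cond1 a) (cond1 b)
    · exact (hprev3 a ha b (Ne.symm hab) (Set.not_disjoint_iff_nonempty_inter.1 hdisj)).trans
        (hS' _)
  refine ⟨cond1, fun a b hab => ?_⟩
  by_cases hW : K ⊆ eNp G (σ.seq a) ∪ eNp G (σ.seq b) ∨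
      Disjoint (eNp G (σ.seq a) ∪ eNp G (σ.seq b)) X
  · exact (hL.2 a b hab).trans (hmono _ hW)
  obtain ⟨x, hxa | hxb, t, -, ht, -, hti, hxt⟩ := early hW
  · exact cond2_of_lt a (σ.lt_of_mem_eNp_of_notMem_eNp hxa (ht <| .inl ·) hti hxt) b hab
  · rw [Set.union_comm]
    exact cond2_of_lt b (σ.lt_of_mem_eNp_of_notMem_eNp hxb (ht <| .inr ·) hti hxt) a hab.symm

end Exchange

theorem stmt_16_general
    {V : Type*} [Fintype V]
    (G : SimpleGraph V) (ρ : PIRep G) (σ : EdgeOrder ρ)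
    (i : Fin σ.m) (S : Set V)
    (hprev2 : ∀ a : Fin σ.m, a < i → 2 ≤ (eNp G (σ.seq a) ∩ S).ncard)
    (hprev3 : ∀ a : Fin σ.m, a < i → ∀ b : Fin σ.m, σ.seq b ≠ σ.seq a →
      (eNp G (σ.seq a) ∩ eNp G (σ.seq b)).Nonempty →
      3 ≤ ((eNp G (σ.seq a) ∪ eNp G (σ.seq b)) ∩ S).ncard)
    (q : ℕ) (hq : q = 2 - (eNp G (σ.seq i) ∩ S).ncard)
    (hcont : ∃ L : Set V, IsMinLiar G L ∧ S ⊆ L) :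
    ∃ L' : Set V, IsMinLiar G L' ∧ S ∪ Tq ρ q (eNp G (σ.seq i) \ S) ⊆ L' := by
  obtain ⟨L, ⟨hL, hLmin⟩, hSL⟩ := hcont
  set N := eNp G (σ.seq i)
  set T := Tq ρ q (N \ S)
  have hTN : T ⊆ N \ S := ρ.Tq_subset q _
  -- trade vertices of `L` in `N \ (S ∪ T)` for the missing vertices of `T`
  obtain ⟨X, hXD, hXK⟩ := Set.exists_subset_card_eq (ncard_sdiff_le_ncard_sdiff_sdiff hSL
    ((σ.isLiarVE_iff.1 hL).1 i) ((ρ.ncard_Tq_le q _).trans hq.le))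
  have hSX : S ⊆ L \ X := fun s hs => ⟨hSL hs, fun hx => (hXD hx).1.2 hs⟩
  refine ⟨L \ X ∪ T \ L, ⟨?_, fun L' hL' => ?_⟩, ?_⟩
  · refine hL.sdiff_union (hSX.trans Set.subset_union_left) hprev2 hprev3 hXK.le
      Set.disjoint_sdiff_left (fun t ht => (hTN ht.1).1) fun x hx t ht => ?_
    exact ρ.r_lt_r_of_notMem_Tq (M := N \ S) ⟨(hXD hx).1.1.1, (hXD hx).1.2⟩ (hXD hx).2 ht.1
  · rw [ncard_sdiff_union_eq (fun x hx => (hXD hx).1.1.2) Set.disjoint_sdiff_left hXK]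
    exact hLmin L' hL'
  · rintro w (hw | hw)
    · exact .inl (hSX hw)
    · by_cases hwL : w ∈ L
      · exact .inl ⟨hwL, fun hx => (hXD hx).2 hw⟩
      · exact .inr ⟨hw, hwL⟩

theorem stmt_16
    {V : Type*} [Fintype V]
    (G : SimpleGraph V) (hconn : G.Connected) (ρ : PIRep G) (σ : EdgeOrder ρ)
    (i : Fin σ.m) (S : Set V)
    (hprev2 : ∀ a : Fin σ.m, a < i → 2 ≤ (eNp G (σ.seq a) ∩ S).ncard)
    (hprev3 : ∀ a : Fin σ.m, a < i → ∀ b : Fin σ.m, σ.seq b ≠ σ.seq a →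
      (eNp G (σ.seq a) ∩ eNp G (σ.seq b)).Nonempty →
      3 ≤ ((eNp G (σ.seq a) ∪ eNp G (σ.seq b)) ∩ S).ncard)
    (hle2 : (eNp G (σ.seq i) ∩ S).ncard ≤ 2)
    (q : ℕ) (hq : q = 2 - (eNp G (σ.seq i) ∩ S).ncard)
    (hcont : ∃ L : Set V, IsMinLiar G L ∧ S ⊆ L) :
    ∃ L' : Set V, IsMinLiar G L' ∧ S ∪ Tq ρ q (eNp G (σ.seq i) \ S) ⊆ L' :=
  stmt_16_general G ρ σ i S hprev2 hprev3 q hq hcont
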